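/- If d* ≥ 0 and f_{j*} = 0 for some integer j* ≥ 0, then P(Θ = ∅) = Φ_{j*}(0) · Π_{j≥j*} φ_{0,j}(0)^{m₀·…·m_{j−1}}. -/

import Mathlib

open MeasureTheory ProbabilityTheory Filter Set Metric
open scoped ENNReal NNReal Topology Classical

noncomputable section

/-- Words of the tree `U₀`: the letter at position `i` lies in `{0, …, m i − 1}`
(we use `0`-based letters instead of the paper's `{1,…,m_{i}}`). -/
def TreeValid (m : ℕ → ℕ) (u : List ℕ) : Prop :=
  ∀ i, ∀ h : i < u.length, u.get ⟨i, h⟩ < m i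

/-- The finite set of valid words of length `j`. -/
def treeWords (m : ℕ → ℕ) : ℕ → Finset (List ℕ)
  | 0 => {[]}
  | j + 1 => (treeWords m j).biUnion fun u => (Finset.range (m j)).image fun k => u ++ [k]

/-- The finite word made of the first `j` letters of `ζ`. -/
def prefixWord (ζ : ℕ → ℕ) (j : ℕ) : List ℕ := List.ofFn fun i : Fin j => ζ i

variable {Ω : Type} [MeasurableSpace Ω] {d : ℕ}

/-- Contraction ratios `L_v = diam J_v / diam J_{π(v)}`. -/
def ratioL (J : List ℕ → Ω → Set (EuclideanSpace ℝ (Fin d))) (v : List ℕ) (ω : Ω) : ℝ :=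
  diam (J v ω) / diam (J v.dropLast ω)

/-- Membership of the word `v` in the subtree `τ_u`. -/
def memTau (m : ℕ → ℕ) (X : List ℕ → Ω → Bool) (u v : List ℕ) (ω : Ω) : Prop :=
  TreeValid m v ∧ u <+: v ∧ ∀ j, u.length ≤ j → j ≤ v.length → X (v.take j) ω = true

/-- The compact set `K_u`, i.e. the points `x_ζ` for `ζ ∈ ∂τ_u`. -/
def Kset (m : ℕ → ℕ) (J : List ℕ → Ω → Set (EuclideanSpace ℝ (Fin d)))
    (X : List ℕ → Ω → Bool) (u : List ℕ) (ω : Ω) : Set (EuclideanSpace ℝ (Fin d)) :=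
  {x | ∃ ζ : ℕ → ℕ, (∀ j, u.length ≤ j → memTau m X u (prefixWord ζ j) ω) ∧
    ∀ j : ℕ, x ∈ J (prefixWord ζ j) ω}

/-- The limit set `Θ`. -/
def ThetaSet (m : ℕ → ℕ) (J : List ℕ → Ω → Set (EuclideanSpace ℝ (Fin d)))
    (X : List ℕ → Ω → Bool) (ω : Ω) : Set (EuclideanSpace ℝ (Fin d)) :=
  ⋃ u ∈ {u : List ℕ | TreeValid m u}, Kset m J X u ω

/-- Hausdorff dimension with the convention `dim ∅ = −∞`. -/
def hdimE {Y : Type*} [EMetricSpace Y] (S : Set Y) : EReal :=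
  if S = ∅ then ⊥ else ((dimH S : ℝ≥0∞) : EReal)

/-- The coefficient `α_{s,j}`. -/
def alphaCoef (m : ℕ → ℕ) (μ : ∀ j : ℕ, Measure (Fin (m j) → ℝ))
    (ν : Bool → ∀ j : ℕ, Measure (Fin (m j) → Bool)) (s : ℝ) (j : ℕ) : ℝ :=
  ∫ x, ∫ ℓ, (∑ k, ℓ k ^ s * (if x k then (1 : ℝ) else 0)) ∂μ j ∂ν true j

/-- The set of admissible `j₀` in the definition of `j̲`. -/
def jlowSet (m : ℕ → ℕ) (μ : ∀ j : ℕ, Measure (Fin (m j) → ℝ))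
    (ν : Bool → ∀ j : ℕ, Measure (Fin (m j) → Bool)) : Set ℕ :=
  {j₀ | ∀ j, j₀ ≤ j → 0 < alphaCoef m μ ν 0 j}

/-- `j̲` (meaningful when `jlowSet` is nonempty). -/
def jlow (m : ℕ → ℕ) (μ : ∀ j : ℕ, Measure (Fin (m j) → ℝ))
    (ν : Bool → ∀ j : ℕ, Measure (Fin (m j) → Bool)) : ℕ :=
  sInf (jlowSet m μ ν)

/-- The function `ρ`. -/
def rhoFn (m : ℕ → ℕ) (μ : ∀ j : ℕ, Measure (Fin (m j) → ℝ))
    (ν : Bool → ∀ j : ℕ, Measure (Fin (m j) → Bool)) (s : ℝ) : EReal :=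
  liminf (fun j : ℕ =>
    (((1 : ℝ) / j * ∑ n ∈ Finset.Ico (jlow m μ ν) j, Real.log (alphaCoef m μ ν s n) : ℝ) : EReal))
    atTop

/-- The critical dimension `d_*`. -/
def dstar (m : ℕ → ℕ) (μ : ∀ j : ℕ, Measure (Fin (m j) → ℝ))
    (ν : Bool → ∀ j : ℕ, Measure (Fin (m j) → Bool)) : EReal :=
  if (jlowSet m μ ν).Nonempty then sSup ((fun s : ℝ => (s : EReal)) '' {s | 0 < rhoFn m μ ν s})
  else ⊥

/-- The σ-field generated by the `X_v` for `v` not a strict descendant of `u`. -/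
def pastSigma (m : ℕ → ℕ) (X : List ℕ → Ω → Bool) (u : List ℕ) : MeasurableSpace Ω :=
  ⨆ v ∈ {v : List ℕ | TreeValid m v ∧ ¬(u <+: v ∧ u ≠ v)}, MeasurableSpace.comap (X v) ⊤

/-- All the standing hypotheses of the model: `(J_u)` is a family of random compacts of positive
diameter satisfying (A), (B), (C), and `(X_u)` is an independent tree-indexed Markov chain with
transition kernels `ν`, in the sense of the Markov condition (D). -/
structure Hyp (d : ℕ) (m : ℕ → ℕ) (βl βh : ℝ)
    (μ : ∀ j : ℕ, Measure (Fin (m j) → ℝ))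
    (ν : Bool → ∀ j : ℕ, Measure (Fin (m j) → Bool))
    (P : Measure Ω)
    (J : List ℕ → Ω → Set (EuclideanSpace ℝ (Fin d)))
    (X : List ℕ → Ω → Bool) : Prop where
  hd : 1 ≤ d
  hm : ∀ j, 2 ≤ m j
  hβl : 0 < βl
  hβlh : βl ≤ βh
  hβh : βh < 1
  hμ : ∀ j, IsProbabilityMeasure (μ j)
  hμsupp : ∀ j, μ j {ℓ | ∀ k, ℓ k ∈ Icc βl βh} = 1
  hν : ∀ t j, IsProbabilityMeasure (ν t j)
  hP : IsProbabilityMeasure P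
  hJcompact : ∀ u, TreeValid m u → ∀ ω, IsCompact (J u ω)
  hJdiam : ∀ u, TreeValid m u → ∀ ω, 0 < diam (J u ω)
  hAsub : ∀ u, TreeValid m u → ∀ ω, ∀ k, k < m u.length → J (u ++ [k]) ω ⊆ J u ω
  hAdisj : ∀ u, TreeValid m u → ∀ ω, ∀ k l, k < m u.length → l < m u.length → k ≠ l →
      interior (J (u ++ [k]) ω) ∩ interior (J (u ++ [l]) ω) = ∅
  hB : ∃ κ : ℝ, 0 < κ ∧ ∀ u, TreeValid m u → ∀ ω,
      ENNReal.ofReal (κ * diam (J u ω) ^ d) ≤ volume (interior (J u ω))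
  hLmeas : ∀ v : List ℕ, Measurable (ratioL J v)
  hXmeas : ∀ v : List ℕ, Measurable (X v)
  hCindep : iIndepFun
      (fun u : {u : List ℕ // TreeValid m u} => fun ω => fun k : Fin (m u.1.length) =>
        ratioL J (u.1 ++ [(k : ℕ)]) ω) P
  hClaw : ∀ u : {u : List ℕ // TreeValid m u},
      Measure.map (fun ω => fun k : Fin (m u.1.length) => ratioL J (u.1 ++ [(k : ℕ)]) ω) P
        = μ u.1.length
  hLXindep : Indep
      (⨆ v ∈ {v : List ℕ | TreeValid m v ∧ v ≠ []},
        MeasurableSpace.comap (ratioL J v) inferInstance)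
      (⨆ v ∈ {v : List ℕ | TreeValid m v}, MeasurableSpace.comap (X v) ⊤) P
  hMarkov : ∀ u, TreeValid m u → ∀ A : Set (Fin (m u.length) → Bool), MeasurableSet A →
      (P[(Set.indicator {ω | (fun k : Fin (m u.length) => X (u ++ [(k : ℕ)]) ω) ∈ A}
          fun _ => (1 : ℝ)) | pastSigma m X u]) =ᵐ[P] fun ω => (ν (X u ω) u.length A).toReal

/-- Number of vertices of generation `j` in state `1`, i.e. `#S_j`. -/
def Scount (m : ℕ → ℕ) (X : List ℕ → Ω → Bool) (j : ℕ) (ω : Ω) : ℕ :=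
  ((treeWords m j).filter fun u => X u ω = true).card

/-- Generating function `Φ_j` of `#S_j`. -/
def PhiFn (P : Measure Ω) (m : ℕ → ℕ) (X : List ℕ → Ω → Bool) (j : ℕ) (z : ℝ) : ℝ :=
  ∫ ω, z ^ Scount m X j ω ∂P

/-- Generating function `φ_{t,j}`. -/
def phiFn (m : ℕ → ℕ) (ν : Bool → ∀ j : ℕ, Measure (Fin (m j) → Bool)) (t : Bool) (j : ℕ)
    (z : ℝ) : ℝ :=
  ∫ x, z ^ (Finset.univ.filter fun k : Fin (m j) => x k = true).card ∂ν t j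

/-- The composition `φ_{1,j} ∘ … ∘ φ_{1,j+n}`. -/
def phiComp (m : ℕ → ℕ) (ν : Bool → ∀ j : ℕ, Measure (Fin (m j) → Bool)) :
    ℕ → ℕ → ℝ → ℝ
  | j, 0, z => phiFn m ν true j z
  | j, n + 1, z => phiFn m ν true j (phiComp m ν (j + 1) n z)

/-- The extinction probability `f_j = lim ↑ φ_{1,j} ∘ … ∘ φ_{1,j+n}(0)`. -/
def fExt (m : ℕ → ℕ) (ν : Bool → ∀ j : ℕ, Measure (Fin (m j) → Bool)) (j : ℕ) : ℝ :=
  ⨆ n : ℕ, phiComp m ν j n 0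

/-- `φ'_{1,n}(1)` as an extended nonnegative real. -/
def Dcoef (m : ℕ → ℕ) (ν : Bool → ∀ j : ℕ, Measure (Fin (m j) → Bool)) (n : ℕ) : ℝ≥0∞ :=
  ENNReal.ofReal (deriv (phiFn m ν true n) 1)

/-- The quantity `σ̲_j`. -/
def sigmaLow (m : ℕ → ℕ) (ν : Bool → ∀ j : ℕ, Measure (Fin (m j) → Bool)) (j : ℕ) : ℝ≥0∞ :=
  max 1
    ((∑' n : ℕ,
        ENNReal.ofReal (deriv (phiFn m ν true (j + n)) 1 + phiFn m ν true (j + n) 0 - 1) /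
          (Dcoef m ν (j + n) * ∏ ℓ ∈ Finset.Icc j (j + n), Dcoef m ν ℓ)) +
      limsup (fun n : ℕ => (∏ ℓ ∈ Finset.Icc j n, Dcoef m ν ℓ)⁻¹) atTop)

/-- The quantity `σ̄_j`. -/
def sigmaHigh (m : ℕ → ℕ) (ν : Bool → ∀ j : ℕ, Measure (Fin (m j) → Bool)) (j : ℕ) : ℝ≥0∞ :=
  (∑' n : ℕ,
      ENNReal.ofReal (deriv (deriv (phiFn m ν true (j + n))) 1) /
        (Dcoef m ν (j + n) * ∏ ℓ ∈ Finset.Icc j (j + n), Dcoef m ν ℓ)) +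
    liminf (fun n : ℕ => (∏ ℓ ∈ Finset.Icc j n, Dcoef m ν ℓ)⁻¹) atTop

/-!
If every generation from `j*` on is entirely in state `0`, no branch of any `τ_u` is infinite and
`Θ = ∅`. Conversely, `φ_{1,j}(z) ≥ z^{m_j}` propagates `f_{j*} = 0` to `f_j = 0` for all `j ≥ j*`,
so `φ_{1,j}(0) = 0`: by the Markov property, almost surely every state-`1` vertex of generation
`≥ j*` has a state-`1` child. Following such children from a state-`1` vertex gives an infinite
branch along which the compacts `J_v` are nested and nonempty, so they meet and `Θ ≠ ∅`. Hence
`{Θ = ∅}` is almost surely the event that generations `j*, j* + 1, …` are entirely in state `0`.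
Conditioning on the past one vertex at a time, each of the `m₀ ⋯ m_{j-1}` vertices of
generation `j` then has only state-`0` children with probability `φ_{0,j}(0)`, while generation
`j*` is entirely in state `0` with probability `Φ_{j*}(0)`.
-/

section Words

variable {m : ℕ → ℕ}

lemma treeValid_append_singleton {u : List ℕ} {k : ℕ} :
    TreeValid m (u ++ [k]) ↔ TreeValid m u ∧ k < m u.length := by
  simp only [TreeValid, List.get_eq_getElem, List.length_append, List.length_singleton]
  constructor
  · intro h
    refine ⟨fun i hi => ?_, by simpa using h u.length (by omega)⟩
    simpa [List.getElem_append_left hi] using h i (by omega)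
  · rintro ⟨hu, hk⟩ i hi
    rcases Nat.lt_succ_iff_lt_or_eq.mp hi with hi | rfl
    · simpa [List.getElem_append_left hi] using hu i hi
    · simpa using hk

lemma mem_treeWords {j : ℕ} {u : List ℕ} :
    u ∈ treeWords m j ↔ TreeValid m u ∧ u.length = j := by
  induction j generalizing u with
  | zero =>
    simp only [treeWords, Finset.mem_singleton, List.length_eq_zero_iff, iff_and_self]
    rintro rfl i hi
    simp at hi
  | succ j ih =>
    simp only [treeWords, Finset.mem_biUnion, Finset.mem_image, Finset.mem_range, ih]
    constructor
    · rintro ⟨v, ⟨hv, rfl⟩, k, hk, rfl⟩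
      exact ⟨treeValid_append_singleton.mpr ⟨hv, hk⟩, by simp⟩
    · rintro ⟨hu, hlen⟩
      obtain rfl | ⟨v, k, rfl⟩ := u.eq_nil_or_concat'
      · simp at hlen
      rw [treeValid_append_singleton] at hu
      simp only [List.length_append, List.length_singleton, Nat.add_right_cancel_iff] at hlen
      exact ⟨v, ⟨hu.1, hlen⟩, k, hlen ▸ hu.2, rfl⟩

lemma card_treeWords (j : ℕ) : (treeWords m j).card = ∏ i ∈ Finset.range j, m i := by
  induction j with
  | zero => simp [treeWords]
  | succ j ih =>
    rw [treeWords, Finset.card_biUnion, Finset.prod_range_succ, ← ih, Finset.card_eq_sum_ones,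
      Finset.sum_mul, one_mul]
    · refine Finset.sum_congr rfl fun u _ => ?_
      rw [Finset.card_image_of_injective _ fun a b hab => by simpa using hab, Finset.card_range]
    · intro u _ v _ huv
      simp only [Function.onFun, Finset.disjoint_left, Finset.mem_image]
      rintro w ⟨k, -, rfl⟩ ⟨l, -, hlk⟩
      exact huv (List.append_inj' hlk rfl).1.symm

lemma prefixWord_succ (ζ : ℕ → ℕ) (j : ℕ) :
    prefixWord ζ (j + 1) = prefixWord ζ j ++ [ζ j] := by
  simp only [prefixWord, List.ofFn_succ', List.concat_eq_append]
  rfl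

lemma take_prefixWord (ζ : ℕ → ℕ) {i j : ℕ} (hij : i ≤ j) :
    (prefixWord ζ j).take i = prefixWord ζ i :=
  List.ext_getElem (by simp [prefixWord, hij]) fun _ _ _ => by simp [prefixWord]

lemma treeValid_prefixWord {ζ : ℕ → ℕ} {j : ℕ} :
    TreeValid m (prefixWord ζ j) ↔ ∀ i < j, ζ i < m i := by
  simp [TreeValid, prefixWord]

end Words

lemma exists_prefixWord_of_forall_exists_append {G : List ℕ → Prop}
    (hG : ∀ v, G v → ∃ k, G (v ++ [k])) {u : List ℕ} (hu : G u) :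
    ∃ ζ : ℕ → ℕ, prefixWord ζ u.length = u ∧ ∀ j, u.length ≤ j → G (prefixWord ζ j) := by
  choose! c hc using hG
  let w : ℕ → List ℕ := fun n => Nat.rec u (fun _ v => v ++ [c v]) n
  have hw : ∀ n, G (w n) := fun n => Nat.rec hu (fun _ ih => hc _ ih) n
  let ζ : ℕ → ℕ := fun i => if h : i < u.length then u[i] else c (w (i - u.length))
  have hζw : ∀ n, prefixWord ζ (u.length + n) = w n := by
    intro n
    induction n with
    | zero =>
      exact List.ext_getElem (by simp [prefixWord, w]) fun _ _ _ => by simp [prefixWord, ζ, w]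
    | succ n ih =>
      rw [← add_assoc, prefixWord_succ, ih]
      simp [ζ, w]
  refine ⟨ζ, hζw 0, fun j hj => ?_⟩
  obtain ⟨n, rfl⟩ := Nat.exists_eq_add_of_le hj
  exact hζw n ▸ hw n

section LimitSet

omit [MeasurableSpace Ω]

variable {m : ℕ → ℕ} {J : List ℕ → Ω → Set (EuclideanSpace ℝ (Fin d))}
  {X : List ℕ → Ω → Bool} {ω : Ω}

lemma memTau_prefixWord {u : List ℕ} {ζ : ℕ → ℕ} (hζu : prefixWord ζ u.length = u)
    (hζ : ∀ j, u.length ≤ j → TreeValid m (prefixWord ζ j) ∧ X (prefixWord ζ j) ω = true)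
    {j : ℕ} (hj : u.length ≤ j) : memTau m X u (prefixWord ζ j) ω := by
  refine ⟨(hζ j hj).1, ?_, fun i hi hij => ?_⟩
  · rw [← hζu, ← take_prefixWord ζ hj]
    exact List.take_prefix _ _
  · rw [take_prefixWord ζ (by simpa [prefixWord] using hij)]
    exact (hζ i hi).2

lemma thetaSet_nonempty_of_forall_exists_child
    (hJc : ∀ u, TreeValid m u → IsCompact (J u ω))
    (hJne : ∀ u, TreeValid m u → (J u ω).Nonempty)
    (hJsub : ∀ u, TreeValid m u → ∀ k < m u.length, J (u ++ [k]) ω ⊆ J u ω)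
    {u : List ℕ} (hu : TreeValid m u) (hXu : X u ω = true)
    (hchild : ∀ v, TreeValid m v → u.length ≤ v.length → X v ω = true →
      ∃ k < m v.length, X (v ++ [k]) ω = true) :
    (ThetaSet m J X ω).Nonempty := by
  obtain ⟨ζ, hζu, hζ⟩ := exists_prefixWord_of_forall_exists_append
    (G := fun v => TreeValid m v ∧ u.length ≤ v.length ∧ X v ω = true)
    (fun v ⟨hv, hlen, hX⟩ =>
      have ⟨k, hk, hXk⟩ := hchild v hv hlen hX
      ⟨k, treeValid_append_singleton.mpr ⟨hv, hk⟩, by simp; omega, hXk⟩)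
    ⟨hu, le_rfl, hXu⟩
  have hvalid : ∀ j, TreeValid m (prefixWord ζ j) := fun j =>
    treeValid_prefixWord.mpr fun i hi =>
      treeValid_prefixWord.mp (hζ (j + u.length) (by omega)).1 i (by omega)
  have hnested : ∀ j, J (prefixWord ζ (j + 1)) ω ⊆ J (prefixWord ζ j) ω := fun j => by
    have hk := (treeValid_append_singleton.mp (prefixWord_succ ζ j ▸ hvalid (j + 1))).2
    rw [prefixWord_succ]
    exact hJsub _ (hvalid j) _ hk
  obtain ⟨x, hx⟩ := IsCompact.nonempty_iInter_of_sequence_nonempty_isCompact_isClosed _ hnested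
    (fun j => hJne _ (hvalid j)) (hJc _ (hvalid 0)) fun j => (hJc _ (hvalid j)).isClosed
  exact ⟨x, mem_biUnion hu
    ⟨ζ, fun j hj => memTau_prefixWord hζu (fun i hi => ⟨(hζ i hi).1, (hζ i hi).2.2⟩) hj,
      mem_iInter.mp hx⟩⟩

/-- The event `#S_j = 0`. -/
def deadLevel (m : ℕ → ℕ) (X : List ℕ → Ω → Bool) (j : ℕ) : Set Ω :=
  {ω | ∀ u ∈ treeWords m j, X u ω = false}

def childrenDead (m : ℕ → ℕ) (X : List ℕ → Ω → Bool) (u : List ℕ) : Set Ω :=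
  {ω | ∀ k : Fin (m u.length), X (u ++ [(k : ℕ)]) ω = false}

lemma deadLevel_succ (j : ℕ) :
    deadLevel m X (j + 1) = ⋂ u ∈ treeWords m j, childrenDead m X u := by
  ext ω
  simp only [deadLevel, childrenDead, treeWords, Finset.mem_biUnion, Finset.mem_image,
    Finset.mem_range, mem_iInter]
  constructor
  · intro hω u hu k
    exact hω _ ⟨u, hu, k, (mem_treeWords.mp hu).2 ▸ k.isLt, rfl⟩
  · rintro hω _ ⟨u, hu, k, hk, rfl⟩
    exact hω u hu ⟨k, (mem_treeWords.mp hu).2 ▸ hk⟩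

lemma thetaSet_eq_empty_of_mem_deadLevel {jstar : ℕ}
    (hω : ω ∈ ⋂ n, deadLevel m X (jstar + n)) : ThetaSet m J X ω = ∅ := by
  refine eq_empty_iff_forall_notMem.mpr fun x hx => ?_
  obtain ⟨u, -, ζ, hζ, -⟩ := mem_iUnion₂.mp hx
  have hmem := hζ (jstar + u.length) (by omega)
  have hX := hmem.2.2 _ (by simp [prefixWord]) le_rfl
  rw [List.take_length] at hX
  have hdead :=
    mem_iInter.mp hω u.length _ (mem_treeWords.mpr ⟨hmem.1, by simp [prefixWord]⟩)
  simp [hX] at hdead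

lemma setOf_thetaSet_eq_empty_subset
    (hJc : ∀ u, TreeValid m u → ∀ ω, IsCompact (J u ω))
    (hJne : ∀ u, TreeValid m u → ∀ ω, (J u ω).Nonempty)
    (hJsub : ∀ u, TreeValid m u → ∀ ω, ∀ k < m u.length, J (u ++ [k]) ω ⊆ J u ω)
    (jstar : ℕ) :
    {ω | ThetaSet m J X ω = ∅} ⊆ (⋂ n, deadLevel m X (jstar + n)) ∪
      ⋃ u ∈ {u | TreeValid m u ∧ jstar ≤ u.length},
        {ω | X u ω = true} ∩ childrenDead m X u := by
  intro ω hω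
  by_contra hcon
  simp only [mem_union, mem_iInter, deadLevel, mem_ofPred_eq, mem_iUnion, mem_inter_iff,
    childrenDead, not_or, not_forall, not_exists, not_and, Bool.not_eq_false] at hcon
  obtain ⟨⟨n, u, hu, hXu⟩, hchild⟩ := hcon
  obtain ⟨hu, hlen⟩ := mem_treeWords.mp hu
  refine (thetaSet_nonempty_of_forall_exists_child (hJc · · ω) (hJne · · ω) (hJsub · · ω) hu
    hXu fun v hv hlen hXv => ?_).ne_empty hω
  obtain ⟨k, hk⟩ := hchild v ⟨hv, by omega⟩ hXv
  exact ⟨k, k.isLt, hk⟩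

lemma measurableSet_pastSigma_preimage {u v : List ℕ} (hv : TreeValid m v)
    (hvu : ¬(u <+: v ∧ u ≠ v)) (s : Set Bool) : MeasurableSet[pastSigma m X u] (X v ⁻¹' s) :=
  le_iSup₂ (f := fun v (_ : v ∈ {v | TreeValid m v ∧ ¬(u <+: v ∧ u ≠ v)}) =>
    MeasurableSpace.comap (X v) ⊤) v ⟨hv, hvu⟩ _ ⟨s, trivial, rfl⟩

lemma measurableSet_pastSigma_deadLevel {u : List ℕ} {j : ℕ} (hj : j ≤ u.length) :
    MeasurableSet[pastSigma m X u] (deadLevel m X j) := by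
  simp only [deadLevel, ofPred_forall]
  refine Finset.measurableSet_biInter _ fun v hv => measurableSet_pastSigma_preimage
    (mem_treeWords.mp hv).1 (fun ⟨hp, hne⟩ => hne ?_) {false}
  exact hp.eq_of_length (le_antisymm hp.length_le ((mem_treeWords.mp hv).2 ▸ hj))

lemma measurableSet_pastSigma_childrenDead {u v : List ℕ} (hv : TreeValid m v)
    (hlen : v.length = u.length) (hne : v ≠ u) :
    MeasurableSet[pastSigma m X u] (childrenDead m X v) := by
  simp only [childrenDead, ofPred_forall]
  refine MeasurableSet.iInter fun k => measurableSet_pastSigma_preimage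
    (treeValid_append_singleton.mpr ⟨hv, k.isLt⟩) (fun ⟨hp, _⟩ => hne ?_) {false}
  rcases List.prefix_concat_iff.mp hp with h | h
  · simp [h] at hlen
  · exact (h.eq_of_length hlen.symm).symm

end LimitSet

lemma integral_zero_pow {α : Type*} [MeasurableSpace α] (μ : Measure α) {f : α → ℕ}
    (hf : MeasurableSet {x | f x = 0}) : ∫ x, (0 : ℝ) ^ f x ∂μ = μ.real {x | f x = 0} := by
  have : (fun x => (0 : ℝ) ^ f x) = {x | f x = 0}.indicator 1 := by
    ext x
    simp [zero_pow_eq, Set.indicator_apply]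
  rw [this, integral_indicator_one hf]

section GeneratingFunctions

variable {m : ℕ → ℕ} {ν : Bool → ∀ j : ℕ, Measure (Fin (m j) → Bool)}

lemma phiFn_zero (t : Bool) (j : ℕ) :
    phiFn m ν t j 0 = (ν t j).real {x | ∀ k, x k = false} := by
  rw [phiFn, integral_zero_pow _ (Set.toFinite _).measurableSet]
  simp [Finset.card_eq_zero, Finset.filter_eq_empty_iff]

lemma phiFn_mem_Icc {t : Bool} {j : ℕ} [IsProbabilityMeasure (ν t j)] {z : ℝ}
    (hz : z ∈ Icc 0 1) : phiFn m ν t j z ∈ Icc 0 1 := by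
  refine ⟨integral_nonneg fun _ => pow_nonneg hz.1 _, ?_⟩
  calc phiFn m ν t j z ≤ ∫ _, (1 : ℝ) ∂ν t j :=
        integral_mono .of_finite (integrable_const _) fun _ => pow_le_one₀ hz.1 hz.2
    _ = 1 := by simp

lemma pow_le_phiFn_true {j : ℕ} [IsProbabilityMeasure (ν true j)] {z : ℝ}
    (hz : z ∈ Icc 0 1) : z ^ m j ≤ phiFn m ν true j z := by
  calc z ^ m j = ∫ _, z ^ m j ∂ν true j := by simp
    _ ≤ phiFn m ν true j z := integral_mono (integrable_const _) .of_finite fun _ =>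
        pow_le_pow_of_le_one hz.1 hz.2 ((Finset.card_filter_le _ _).trans (by simp))

variable (hν : ∀ j, IsProbabilityMeasure (ν true j))
include hν

lemma phiComp_mem_Icc (j n : ℕ) : phiComp m ν j n 0 ∈ Icc 0 1 := by
  induction n generalizing j with
  | zero => have := hν j; exact phiFn_mem_Icc ⟨le_rfl, zero_le_one⟩
  | succ n ih => have := hν j; exact phiFn_mem_Icc (ih (j + 1))

lemma fExt_eq_zero_iff {j : ℕ} : fExt m ν j = 0 ↔ ∀ n, phiComp m ν j n 0 = 0 := by
  refine ⟨fun h n => le_antisymm ?_ (phiComp_mem_Icc hν j n).1, fun h => by simp [fExt, h]⟩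
  exact (le_ciSup (f := fun n => phiComp m ν j n 0)
    ⟨1, by rintro _ ⟨n, rfl⟩; exact (phiComp_mem_Icc hν j n).2⟩ n).trans_eq h

lemma fExt_succ_eq_zero (hm : ∀ j, m j ≠ 0) {j : ℕ} (h : fExt m ν j = 0) :
    fExt m ν (j + 1) = 0 := by
  rw [fExt_eq_zero_iff hν] at h ⊢
  intro n
  have := hν j
  have hz := phiComp_mem_Icc hν (j + 1) n
  refine (pow_eq_zero_iff (hm j)).mp (le_antisymm ?_ (pow_nonneg hz.1 _))
  calc _ ≤ phiFn m ν true j (phiComp m ν (j + 1) n 0) := pow_le_phiFn_true hz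
    _ = 0 := h (n + 1)

lemma phiFn_true_zero_of_fExt_eq_zero (hm : ∀ j, m j ≠ 0) {jstar : ℕ}
    (h : fExt m ν jstar = 0) {j : ℕ} (hj : jstar ≤ j) : phiFn m ν true j 0 = 0 := by
  have hj : fExt m ν j = 0 := by
    induction j, hj using Nat.le_induction with
    | base => exact h
    | succ j _ ih => exact fExt_succ_eq_zero hν hm ih
  exact (fExt_eq_zero_iff hν).mp hj 0

end GeneratingFunctions

section Markov

variable {m : ℕ → ℕ} {X : List ℕ → Ω → Bool}

lemma pastSigma_le (hX : ∀ v, Measurable (X v)) (u : List ℕ) :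
    pastSigma m X u ≤ ‹MeasurableSpace Ω› :=
  iSup₂_le fun v _ => by
    rintro _ ⟨s, -, rfl⟩
    exact hX v (Set.toFinite s).measurableSet

variable {d : ℕ} {βl βh : ℝ} {μ : ∀ j : ℕ, Measure (Fin (m j) → ℝ)}
  {ν : Bool → ∀ j : ℕ, Measure (Fin (m j) → Bool)} {P : Measure Ω}
  {J : List ℕ → Ω → Set (EuclideanSpace ℝ (Fin d))}

lemma measureReal_inter_children_mem (h : Hyp d m βl βh μ ν P J X) {u : List ℕ}
    (hu : TreeValid m u) {t : Bool} {B : Set Ω} (hB : MeasurableSet[pastSigma m X u] B)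
    (hBt : B ⊆ {ω | X u ω = t}) (A : Set (Fin (m u.length) → Bool)) :
    P.real (B ∩ {ω | (fun k : Fin (m u.length) => X (u ++ [(k : ℕ)]) ω) ∈ A})
      = (ν t u.length).real A * P.real B := by
  have := h.hP
  have hle := pastSigma_le (m := m) h.hXmeas u
  set S := {ω | (fun k : Fin (m u.length) => X (u ++ [(k : ℕ)]) ω) ∈ A}
  have hS : MeasurableSet S :=
    measurable_pi_iff.mpr (fun k => h.hXmeas _) (Set.toFinite A).measurableSet
  calc P.real (B ∩ S) = ∫ ω in B, S.indicator (fun _ => (1 : ℝ)) ω ∂P := by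
        rw [integral_indicator_const _ hS, measureReal_restrict_apply hS, smul_eq_mul, mul_one,
          inter_comm]
    _ = ∫ ω in B, (P[S.indicator (fun _ => (1 : ℝ)) | pastSigma m X u]) ω ∂P :=
        (setIntegral_condExp hle ((integrable_const _).indicator hS) hB).symm
    _ = ∫ _ in B, (ν t u.length).real A ∂P :=
        setIntegral_congr_ae (hle _ hB) ((h.hMarkov u hu A (Set.toFinite A).measurableSet).mono
          fun ω hω hωB => by rw [hω]; dsimp only; rw [show X u ω = t from hBt hωB]; rfl)
    _ = (ν t u.length).real A * P.real B := by rw [setIntegral_const, smul_eq_mul, mul_comm]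

lemma measureReal_inter_biInter_childrenDead (h : Hyp d m βl βh μ ν P J X) {j : ℕ}
    {B : Set Ω}
    (hB : ∀ u ∈ treeWords m j, MeasurableSet[pastSigma m X u] B)
    (hBX : ∀ u ∈ treeWords m j, B ⊆ {ω | X u ω = false})
    {s : Finset (List ℕ)} (hs : s ⊆ treeWords m j) :
    P.real (B ∩ ⋂ u ∈ s, childrenDead m X u)
      = (ν false j).real {x | ∀ k, x k = false} ^ s.card * P.real B := by
  induction s using Finset.induction_on with
  | empty => simp
  | insert a s ha ih =>
    have ha' := hs (Finset.mem_insert_self a s)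
    have hs' := (Finset.subset_insert a s).trans hs
    obtain ⟨hav, rfl⟩ := mem_treeWords.mp ha'
    have hmeas : MeasurableSet[pastSigma m X a] (B ∩ ⋂ u ∈ s, childrenDead m X u) :=
      (hB a ha').inter <| Finset.measurableSet_biInter s fun v hv =>
        have ⟨hvv, hvl⟩ := mem_treeWords.mp (hs' hv)
        measurableSet_pastSigma_childrenDead hvv hvl (ne_of_mem_of_not_mem hv ha)
    have hpeel : P.real ((B ∩ ⋂ u ∈ s, childrenDead m X u) ∩ childrenDead m X a)
        = (ν false a.length).real {x | ∀ k, x k = false} *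
          P.real (B ∩ ⋂ u ∈ s, childrenDead m X u) :=
      measureReal_inter_children_mem h hav hmeas (fun ω hω => hBX a ha' hω.1)
        {x | ∀ k, x k = false}
    rw [Finset.set_biInter_insert, inter_left_comm, inter_comm, hpeel, ih hs',
      Finset.card_insert_of_notMem ha, pow_succ]
    ring

end Markov

lemma multipliable_of_nonneg_of_le_one {ι : Type*} {f : ι → ℝ} (h0 : ∀ i, 0 ≤ f i)
    (h1 : ∀ i, f i ≤ 1) : Multipliable f :=
  ⟨_, tendsto_atTop_ciInf (Finset.prod_anti_set_of_le_one h0 h1)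
    ⟨0, by rintro _ ⟨s, rfl⟩; exact Finset.prod_nonneg fun i _ => h0 i⟩⟩

section Extinction

variable {d : ℕ} {m : ℕ → ℕ} {βl βh : ℝ} {μ : ∀ j : ℕ, Measure (Fin (m j) → ℝ)}
  {ν : Bool → ∀ j : ℕ, Measure (Fin (m j) → Bool)} {P : Measure Ω}
  {J : List ℕ → Ω → Set (EuclideanSpace ℝ (Fin d))} {X : List ℕ → Ω → Bool}

lemma measurableSet_deadLevel (hX : ∀ v, Measurable (X v)) (j : ℕ) :
    MeasurableSet (deadLevel m X j) := by
  simp only [deadLevel, ofPred_forall]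
  exact Finset.measurableSet_biInter _ fun u _ => hX u (measurableSet_singleton false)

lemma PhiFn_zero (hX : ∀ v, Measurable (X v)) (j : ℕ) :
    PhiFn P m X j 0 = P.real (deadLevel m X j) := by
  have hset : {ω | Scount m X j ω = 0} = deadLevel m X j := by
    ext ω
    simp [Scount, deadLevel, Finset.card_eq_zero, Finset.filter_eq_empty_iff]
  rw [PhiFn, integral_zero_pow _ (hset ▸ measurableSet_deadLevel hX j), hset]

lemma measureReal_biInter_deadLevel (h : Hyp d m βl βh μ ν P J X) (jstar N : ℕ) :
    P.real (⋂ n ≤ N, deadLevel m X (jstar + n)) = PhiFn P m X jstar 0 *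
      ∏ n ∈ Finset.range N,
        phiFn m ν false (jstar + n) 0 ^ ∏ i ∈ Finset.range (jstar + n), m i := by
  induction N with
  | zero => simp [PhiFn_zero h.hXmeas]
  | succ N ih =>
    rw [biInter_le_succ, ← add_assoc, deadLevel_succ, measureReal_inter_biInter_childrenDead h
      (fun u hu => ?_) (fun u hu ω hω => ?_) subset_rfl, ih, card_treeWords, ← phiFn_zero,
      Finset.prod_range_succ]
    · ring
    · exact MeasurableSet.iInter fun n => MeasurableSet.iInter fun hn =>
        measurableSet_pastSigma_deadLevel (by rw [(mem_treeWords.mp hu).2]; omega)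
    · exact mem_iInter₂.mp hω N le_rfl u hu

lemma setOf_thetaSet_eq_empty_ae_eq (h : Hyp d m βl βh μ ν P J X) {jstar : ℕ}
    (hφ : ∀ j, jstar ≤ j → phiFn m ν true j 0 = 0) :
    {ω | ThetaSet m J X ω = ∅} =ᵐ[P] ⋂ n, deadLevel m X (jstar + n) := by
  have := h.hP
  have hnull : P (⋃ u ∈ {u | TreeValid m u ∧ jstar ≤ u.length},
      {ω | X u ω = true} ∩ childrenDead m X u) = 0 := by
    refine (measure_biUnion_null_iff (to_countable _)).mpr fun u ⟨hu, hju⟩ => ?_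
    rw [← measureReal_eq_zero_iff]
    refine (measureReal_inter_children_mem h hu (B := {ω | X u ω = true})
      (measurableSet_pastSigma_preimage hu (fun h => h.2 rfl) {true}) subset_rfl
      {x | ∀ k, x k = false}).trans ?_
    rw [← phiFn_zero, hφ _ hju, zero_mul]
  have hJne : ∀ u, TreeValid m u → ∀ ω, (J u ω).Nonempty := fun u hu ω =>
    nonempty_iff_ne_empty.mpr fun he => (h.hJdiam u hu ω).ne' (he ▸ Metric.diam_empty)
  refine EventuallyLE.antisymm ?_
    (Eventually.of_forall fun ω hω => thetaSet_eq_empty_of_mem_deadLevel hω)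
  filter_upwards [measure_eq_zero_iff_ae_notMem.mp hnull] with ω hω hΘ
  exact (setOf_thetaSet_eq_empty_subset h.hJcompact hJne h.hAsub jstar hΘ).resolve_right hω

end Extinction

theorem stmt2_general
    (d : ℕ) (m : ℕ → ℕ) (βl βh : ℝ)
    (μ : ∀ j : ℕ, Measure (Fin (m j) → ℝ))
    (ν : Bool → ∀ j : ℕ, Measure (Fin (m j) → Bool))
    (Ω : Type) [MeasurableSpace Ω] (P : Measure Ω)
    (J : List ℕ → Ω → Set (EuclideanSpace ℝ (Fin d)))
    (X : List ℕ → Ω → Bool)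
    (h : Hyp d m βl βh μ ν P J X)
    (jstar : ℕ) (hjstar : fExt m ν jstar = 0) :
    (P {ω | ThetaSet m J X ω = ∅}).toReal =
      PhiFn P m X jstar 0 *
        ∏' n : ℕ, phiFn m ν false (jstar + n) 0 ^ ∏ i ∈ Finset.range (jstar + n), m i := by
  have := h.hP
  have := h.hν
  have hφ : ∀ j, jstar ≤ j → phiFn m ν true j 0 = 0 := fun j =>
    phiFn_true_zero_of_fExt_eq_zero (h.hν true) (fun j => (two_pos.trans_le (h.hm j)).ne') hjstar
  have hq (n : ℕ) : phiFn m ν false (jstar + n) 0 ∈ Icc 0 1 :=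
    phiFn_mem_Icc ⟨le_rfl, zero_le_one⟩
  have hprod := (multipliable_of_nonneg_of_le_one
    (fun n => pow_nonneg (hq n).1 (∏ i ∈ Finset.range (jstar + n), m i))
    fun n => pow_le_one₀ (hq n).1 (hq n).2).hasProd.tendsto_prod_nat
  have hlim := tendsto_measure_iInter_le (μ := P) (f := fun n => deadLevel m X (jstar + n))
    (fun n => (measurableSet_deadLevel h.hXmeas (jstar + n)).nullMeasurableSet)
    ⟨0, measure_ne_top _ _⟩
  rw [← measureReal_def, measureReal_congr (setOf_thetaSet_eq_empty_ae_eq h hφ)]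
  refine tendsto_nhds_unique ((ENNReal.tendsto_toReal (measure_ne_top _ _)).comp hlim) ?_
  simpa only [Function.comp_def, ← measureReal_def, measureReal_biInter_deadLevel h]
    using hprod.const_mul (PhiFn P m X jstar 0)

theorem stmt2
    (d : ℕ) (m : ℕ → ℕ) (βl βh : ℝ)
    (μ : ∀ j : ℕ, Measure (Fin (m j) → ℝ))
    (ν : Bool → ∀ j : ℕ, Measure (Fin (m j) → Bool))
    (Ω : Type) [MeasurableSpace Ω] (P : Measure Ω)
    (J : List ℕ → Ω → Set (EuclideanSpace ℝ (Fin d)))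
    (X : List ℕ → Ω → Bool)
    (h : Hyp d m βl βh μ ν P J X)
    (hd0 : 0 ≤ dstar m μ ν)
    (jstar : ℕ) (hjstar : fExt m ν jstar = 0) :
    (P {ω | ThetaSet m J X ω = ∅}).toReal =
      PhiFn P m X jstar 0 *
        ∏' n : ℕ, phiFn m ν false (jstar + n) 0 ^ ∏ i ∈ Finset.range (jstar + n), m i :=
  stmt2_general d m βl βh μ ν Ω P J X h jstar hjstar
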